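/- The class of complements of quasi-threshold graphs has unbounded linear clique-width: for every k there exists a quasi-threshold graph G whose complement satisfies lcw(complement of G) > k. -/

import Mathlib

/-! ## Common definitions

Linear clique-width (lcw) expressions and derived notions, following
Brignall–Lozin–Stacho, "Bichain graphs: geometric model and universal graphs" /
"Linear clique-width of subclasses of cographs".

An lcw expression over a label alphabet `L` is a list of operations:
insert a new vertex with a given label, add all edges between two distinct
label classes, or relabel one label class to another.  Vertices are indexed
by the natural numbers `0, 1, 2, …` in order of insertion. -/

/-- The three kinds of operations of an lcw expression. -/
inductive LcwOp (L : Type) where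
  | insert : L → LcwOp L
  | join : L → L → LcwOp L
  | relabel : L → L → LcwOp L

/-- The state while executing an lcw expression: the number `n` of vertices
inserted so far (the vertices are `0, …, n-1`), the adjacency relation built
so far, and the current labeling (`none` for indices not yet inserted). -/
structure LcwState (L : Type) where
  n : ℕ
  adj : ℕ → ℕ → Prop
  lab : ℕ → Option L

/-- The initial, empty state. -/
def LcwState.init (L : Type) : LcwState L :=
  ⟨0, fun _ _ => False, fun _ => none⟩

/-- Executing one operation. -/
def LcwState.step {L : Type} [DecidableEq L] (s : LcwState L) : LcwOp L → LcwState L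
  | .insert a => ⟨s.n + 1, s.adj, fun v => if v = s.n then some a else s.lab v⟩
  | .join i j =>
      ⟨s.n,
       fun u v => s.adj u v ∨
         (u ≠ v ∧ ((s.lab u = some i ∧ s.lab v = some j) ∨
                   (s.lab u = some j ∧ s.lab v = some i))),
       s.lab⟩
  | .relabel i j => ⟨s.n, s.adj, fun v => if s.lab v = some i then some j else s.lab v⟩

/-- Executing an lcw expression (a list of operations) from the empty state. -/
def runLcw {L : Type} [DecidableEq L] (e : List (LcwOp L)) : LcwState L :=
  e.foldl LcwState.step (LcwState.init L)

/-- Well-formedness: every edge-adding operation uses two distinct labels. -/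
def WfExpr {L : Type} (e : List (LcwOp L)) : Prop :=
  ∀ op ∈ e, ∀ i j : L, op = LcwOp.join i j → i ≠ j

/-- The expression `e` builds the graph `G`, where the bijection
`f` sends each vertex of `G` to its insertion index (so `f` records the
insertion order of the vertices). -/
def BuildsVia {L V : Type} [DecidableEq L] [Fintype V] (e : List (LcwOp L))
    (G : SimpleGraph V) (f : V → ℕ) : Prop :=
  WfExpr e ∧ Function.Injective f ∧ (runLcw e).n = Fintype.card V ∧
    (∀ v, f v < (runLcw e).n) ∧ ∀ u v, G.Adj u v ↔ (runLcw e).adj (f u) (f v)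

/-- The expression `e` builds the graph `G`. -/
def Builds {L V : Type} [DecidableEq L] [Fintype V] (e : List (LcwOp L))
    (G : SimpleGraph V) : Prop :=
  ∃ f : V → ℕ, BuildsVia e G f

/-- The linear clique-width of a finite graph: the least size of a label
alphabet over which some lcw expression builds `G`.  (An expression over
`Fin k` is an expression using `k` labels; an *efficient* expression for `G`
is one over `Fin (lcw G)`.) -/
noncomputable def lcw {V : Type} [Fintype V] (G : SimpleGraph V) : ℕ :=
  sInf {k : ℕ | ∃ e : List (LcwOp (Fin k)), Builds e G}

/-- `ℓ` is a sink label of the expression `e`: it is never used in an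
edge-adding operation and vertices labeled `ℓ` are never relabeled. -/
def SinkLabel {L : Type} (e : List (LcwOp L)) (ℓ : L) : Prop :=
  (∀ op ∈ e, ∀ i j : L, op = LcwOp.join i j → i ≠ ℓ ∧ j ≠ ℓ) ∧
  (∀ op ∈ e, ∀ j : L, op = LcwOp.relabel ℓ j → j = ℓ)

/-- An expression is sink-free if no label is a sink label. -/
def SinkFree {L : Type} (e : List (LcwOp L)) : Prop :=
  ∀ ℓ : L, ¬ SinkLabel e ℓ

/-- The disjoint union of two graphs. -/
def GraphDisjUnion {V W : Type} (G : SimpleGraph V) (H : SimpleGraph W) :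
    SimpleGraph (V ⊕ W) where
  Adj x y :=
    match x, y with
    | Sum.inl a, Sum.inl b => G.Adj a b
    | Sum.inr a, Sum.inr b => H.Adj a b
    | _, _ => False
  symm := by
    constructor
    rintro (a | a) (b | b) h
    · exact G.adj_symm h
    · exact h.elim
    · exact h.elim
    · exact H.adj_symm h
  loopless := by
    constructor
    rintro (a | a) h
    · exact G.irrefl h
    · exact H.irrefl h

/-- The join of two graphs: their disjoint union together with all edges
between the two sides. -/
def GraphJoin {V W : Type} (G : SimpleGraph V) (H : SimpleGraph W) :
    SimpleGraph (V ⊕ W) :=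
  (GraphDisjUnion Gᶜ Hᶜ)ᶜ

/-- `H` is (isomorphic to) an induced subgraph of `G`. -/
def InducedSubgraphOf {W V : Type} (H : SimpleGraph W) (G : SimpleGraph V) : Prop :=
  ∃ f : W ↪ V, ∀ a b : W, H.Adj a b ↔ G.Adj (f a) (f b)

/-- The path `P₄` on four vertices (edges 01, 12, 23). -/
def pathP4 : SimpleGraph (Fin 4) :=
  SimpleGraph.fromRel (fun a b => (b : ℕ) = (a : ℕ) + 1)

/-- The cycle `C₄` on four vertices (edges 01, 12, 23, 30). -/
def cycleC4 : SimpleGraph (Fin 4) :=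
  SimpleGraph.fromRel (fun a b => (b : ℕ) = (a : ℕ) + 1 ∨ ((a : ℕ) = 3 ∧ (b : ℕ) = 0))

/-- The graph `2K₂` (edges 01 and 23). -/
def twoK2 : SimpleGraph (Fin 4) :=
  SimpleGraph.fromRel (fun a b => ((a : ℕ) = 0 ∧ (b : ℕ) = 1) ∨ ((a : ℕ) = 2 ∧ (b : ℕ) = 3))

/-- Cographs: the graphs with no induced `P₄`. -/
def IsCograph {V : Type} (G : SimpleGraph V) : Prop :=
  ¬ InducedSubgraphOf pathP4 G

/-- Quasi-threshold (trivially perfect) graphs: no induced `P₄` and no induced `C₄`. -/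
def IsQuasiThreshold {V : Type} (G : SimpleGraph V) : Prop :=
  ¬ InducedSubgraphOf pathP4 G ∧ ¬ InducedSubgraphOf cycleC4 G

/-- Threshold graphs: no induced `P₄`, `C₄` or `2K₂`. -/
def IsThreshold {V : Type} (G : SimpleGraph V) : Prop :=
  ¬ InducedSubgraphOf pathP4 G ∧ ¬ InducedSubgraphOf cycleC4 G ∧ ¬ InducedSubgraphOf twoK2 G

/-- A finite graph, encoded with vertex set `Fin n`.  A *class* of graphs,
i.e. a set of finite graphs closed under isomorphism, is modelled as a
hereditary set of `FinGraph`s (hereditary sets are automatically closed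
under isomorphism). -/
def FinGraph : Type := Σ n : ℕ, SimpleGraph (Fin n)

/-- The complement of a finite graph. -/
def FinGraph.compl (G : FinGraph) : FinGraph := ⟨G.1, G.2ᶜ⟩

/-- The induced-subgraph order on finite graphs. -/
def IndF (H G : FinGraph) : Prop := InducedSubgraphOf H.2 G.2

/-- A set of finite graphs is hereditary if it is closed downward under the
induced subgraph order (in particular it is closed under isomorphism). -/
def Hereditary (C : Set FinGraph) : Prop :=
  ∀ G ∈ C, ∀ H : FinGraph, IndF H G → H ∈ C

/-- The finite graph `K` is isomorphic to the graph `G`. -/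
def IsoTo {V : Type} (K : FinGraph) (G : SimpleGraph V) : Prop :=
  ∃ e : Fin K.1 ≃ V, ∀ a b, K.2.Adj a b ↔ G.Adj (e a) (e b)

/-- The class `C` contains (a copy of) the graph `G`. -/
def MemUpToIso (C : Set FinGraph) {V : Type} (G : SimpleGraph V) : Prop :=
  ∃ K ∈ C, IsoTo K G

/-- `C` is closed under disjoint unions. -/
def ClosedUnderDisjointUnions (C : Set FinGraph) : Prop :=
  ∀ G ∈ C, ∀ H ∈ C, MemUpToIso C (GraphDisjUnion (Sigma.snd G) (Sigma.snd H))

/-- `C` is closed under joins. -/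
def ClosedUnderJoins (C : Set FinGraph) : Prop :=
  ∀ G ∈ C, ∀ H ∈ C, MemUpToIso C (GraphJoin (Sigma.snd G) (Sigma.snd H))

/-- `C` is atomic: it cannot be written as the union of two proper
hereditary subclasses. -/
def AtomicClass (C : Set FinGraph) : Prop :=
  ¬ ∃ D₁ D₂ : Set FinGraph, Hereditary D₁ ∧ Hereditary D₂ ∧
      D₁ ⊂ C ∧ D₂ ⊂ C ∧ C = D₁ ∪ D₂

/-- The inflation `G[H₁, …, Hₙ]` of a graph `G` on `Fin n` by graphs
`H i` (`i : Fin n`): substitute `H i` for the vertex `i` of `G`. -/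
def inflate {n : ℕ} (G : SimpleGraph (Fin n)) (m : Fin n → ℕ)
    (H : ∀ i : Fin n, SimpleGraph (Fin (m i))) :
    SimpleGraph (Σ i : Fin n, Fin (m i)) where
  Adj x y := (x.1 ≠ y.1 ∧ G.Adj x.1 y.1) ∨ ∃ h : x.1 = y.1, (H y.1).Adj (h ▸ x.2) y.2
  symm := by
    constructor
    rintro ⟨i, a⟩ ⟨j, b⟩ (⟨hne, hadj⟩ | ⟨h, hadj⟩)
    · exact Or.inl ⟨hne.symm, G.adj_symm hadj⟩
    · cases h
      exact Or.inr ⟨rfl, (H i).adj_symm hadj⟩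
  loopless := by
    constructor
    rintro ⟨i, a⟩ (⟨hne, _⟩ | ⟨h, hadj⟩)
    · exact hne rfl
    · exact (H i).irrefl hadj

/-- The inflation `C[D]` of the class `C` by the class `D`: all graphs
isomorphic to an inflation of a graph of `C` by graphs of `D`. -/
def classInflate (C D : Set FinGraph) : Set FinGraph :=
  {K | ∃ (n : ℕ) (G : SimpleGraph (Fin n)) (m : Fin n → ℕ)
        (H : ∀ i : Fin n, SimpleGraph (Fin (m i))),
      (⟨n, G⟩ : FinGraph) ∈ C ∧ (∀ i, (⟨m i, H i⟩ : FinGraph) ∈ D) ∧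
      IsoTo K (inflate G m H)}

/-- The class of threshold graphs (as finite graphs). -/
def thresholdClass : Set FinGraph := {G : FinGraph | IsThreshold G.2}

/-- Vertex types of the sequence witnessing unbounded linear clique-width:
`qtV 0` carries `G₁ = K₂` and `qtV (k+1)` carries
`G_{k+2} = K₁ ∗ ((G_{k+1} ∪ G_{k+1}) ∪ (G_{k+1} ∪ G_{k+1}))`. -/
def qtV : ℕ → Type
  | 0 => Fin 2
  | k + 1 => Unit ⊕ ((qtV k ⊕ qtV k) ⊕ (qtV k ⊕ qtV k))

instance qtVFintype : ∀ k : ℕ, Fintype (qtV k)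
  | 0 => inferInstanceAs (Fintype (Fin 2))
  | k + 1 =>
      letI := qtVFintype k
      inferInstanceAs (Fintype (Unit ⊕ ((qtV k ⊕ qtV k) ⊕ (qtV k ⊕ qtV k))))

/-- The graphs `G₁, G₂, …` of the paper, reindexed so that `qtG k = G_{k+1}`:
`qtG 0 = K₂` and `qtG (k+1) = K₁ ∗ ((qtG k ∪ qtG k) ∪ (qtG k ∪ qtG k))`. -/
def qtG : ∀ k : ℕ, SimpleGraph (qtV k)
  | 0 => (⊤ : SimpleGraph (Fin 2))
  | k + 1 =>
      GraphJoin (⊥ : SimpleGraph Unit)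
        (GraphDisjUnion (GraphDisjUnion (qtG k) (qtG k)) (GraphDisjUnion (qtG k) (qtG k)))


/-!
Once the first `m` vertices of an lcw expression are inserted, two of them whose
neighbourhoods among the later vertices differ must already carry different labels. Hence
`K ≤ lcw G` as soon as every insertion order admits `K` early vertices pairwise separated by
late ones, a property that passes to the complement. For the quasi-threshold graphs
`G₁ = K₂`, `G_{k+1} = K₁ ∗ 4 G_k` induction gives `k + 1` such vertices for every order, by
adding one vertex to the family found in a suitable copy of `G_k`.
-/

namespace LcwState

variable {L : Type}

structure Valid (s : LcwState L) : Prop where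
  isSome_lab_iff : ∀ c, (s.lab c).isSome ↔ c < s.n
  not_adj_of_le : ∀ x c, s.n ≤ c → ¬ s.adj x c

lemma valid_init : (init L).Valid :=
  ⟨fun c => by simp [init], fun _ _ _ h => h⟩

variable [DecidableEq L]

lemma n_le_step (s : LcwState L) (op : LcwOp L) : s.n ≤ (s.step op).n := by
  cases op <;> simp [LcwState.step]

lemma n_step_le (s : LcwState L) (op : LcwOp L) : (s.step op).n ≤ s.n + 1 := by
  cases op <;> simp [LcwState.step]

lemma Valid.step {s : LcwState L} (hs : s.Valid) (op : LcwOp L) : (s.step op).Valid := by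
  cases op with
  | insert a =>
    have hn : (s.step (.insert a)).n = s.n + 1 := rfl
    refine ⟨fun c => ?_, fun x c hc => hs.not_adj_of_le x c (by omega)⟩
    by_cases hc : c = s.n
    · simp [LcwState.step, hc]
    · simp [LcwState.step, hc, hs.isSome_lab_iff]
      omega
  | join i j =>
    refine ⟨hs.isSome_lab_iff, fun x c (hc : s.n ≤ c) => ?_⟩
    have hnone : s.lab c = none :=
      Option.not_isSome_iff_eq_none.mp fun h => ((hs.isSome_lab_iff c).mp h).not_ge hc
    simp [LcwState.step, hnone, hs.not_adj_of_le x c hc]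
  | relabel i j =>
    refine ⟨fun c => ?_, hs.not_adj_of_le⟩
    simp only [LcwState.step, ← hs.isSome_lab_iff c]
    split_ifs with h <;> simp [h]

lemma Valid.foldl {s : LcwState L} (hs : s.Valid) (q : List (LcwOp L)) :
    (q.foldl LcwState.step s).Valid := by
  induction q generalizing s with
  | nil => exact hs
  | cons op q ih => exact ih (hs.step op)

lemma adj_foldl_iff_of_lab_eq {a b c : ℕ} (q : List (LcwOp L)) {s : LcwState L}
    (ha : a < s.n) (hb : b < s.n) (hlab : s.lab a = s.lab b) (hac : a ≠ c) (hbc : b ≠ c)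
    (hadj : s.adj a c ↔ s.adj b c) :
    (q.foldl step s).adj a c ↔ (q.foldl step s).adj b c := by
  induction q generalizing s with
  | nil => exact hadj
  | cons op q ih =>
    have ha' := ha.trans_le (s.n_le_step op)
    have hb' := hb.trans_le (s.n_le_step op)
    cases op with
    | insert x => exact ih ha' hb' (by simp [LcwState.step, ha.ne, hb.ne, hlab]) hadj
    | join i j => exact ih ha' hb' hlab (by simp [LcwState.step, hlab, hadj, hac, hbc])
    | relabel i j => exact ih ha' hb' (by simp [LcwState.step, hlab]) hadj

end LcwState

section Lcw

open LcwState

variable {L : Type} [DecidableEq L]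

lemma runLcw_append (p q : List (LcwOp L)) :
    runLcw (p ++ q) = q.foldl LcwState.step (runLcw p) := by
  simp [runLcw, List.foldl_append]

lemma valid_runLcw (e : List (LcwOp L)) : (runLcw e).Valid :=
  LcwState.valid_init.foldl e

/-- Since each operation inserts at most one vertex, every intermediate vertex count is
attained by a prefix. -/
lemma exists_append_runLcw_n_eq (e : List (LcwOp L)) {m : ℕ} (hm : m ≤ (runLcw e).n) :
    ∃ p q, e = p ++ q ∧ (runLcw p).n = m := by
  induction e using List.reverseRecOn with
  | nil => exact ⟨[], [], rfl, by simp_all [runLcw, LcwState.init]⟩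
  | append_singleton e op ih =>
    rw [runLcw_append] at hm
    by_cases hm' : m ≤ (runLcw e).n
    · obtain ⟨p, q, rfl, hp⟩ := ih hm'
      exact ⟨p, q ++ [op], by simp, hp⟩
    · refine ⟨e ++ [op], [], by simp, ?_⟩
      have := (runLcw e).n_step_le op
      rw [runLcw_append]
      simp_all only [List.foldl_cons, List.foldl_nil]
      omega

def SeparatedAfter {V : Type} (G : SimpleGraph V) (f : V → ℕ) (m : ℕ) (a b : V) : Prop :=
  ∃ w, m ≤ f w ∧ ¬(G.Adj a w ↔ G.Adj b w)

/-- When the first `m` vertices have been inserted, vertices that are separated afterwards must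
carry pairwise distinct labels. -/
theorem BuildsVia.card_le [Fintype L] {V : Type} [Fintype V] {e : List (LcwOp L)}
    {G : SimpleGraph V} {f : V → ℕ} (hb : BuildsVia e G f) {K m : ℕ} {s : Fin K → V}
    (hs : ∀ i, f (s i) < m) (hsep : Pairwise fun i j => SeparatedAfter G f m (s i) (s j)) :
    K ≤ Fintype.card L := by
  obtain ⟨-, -, -, hlt, hadj⟩ := hb
  obtain ⟨p, q, rfl, hp⟩ := exists_append_runLcw_n_eq e (min_le_right m (runLcw e).n)
  have hvalid := valid_runLcw p
  have hs' : ∀ i, f (s i) < (runLcw p).n := fun i => by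
    have := hs i; have := hlt (s i); omega
  have hlab : ∀ i, ∃ a, (runLcw p).lab (f (s i)) = some a := fun i =>
    Option.isSome_iff_exists.mp ((hvalid.isSome_lab_iff _).mpr (hs' i))
  choose g hg using hlab
  suffices Function.Injective g by simpa using Fintype.card_le_of_injective g this
  intro i j hij
  by_contra hne
  obtain ⟨w, hw, hsepw⟩ := hsep hne
  have hpw : (runLcw p).n ≤ f w := by omega
  have hsame := adj_foldl_iff_of_lab_eq q (hs' i) (hs' j) (by rw [hg, hg, hij])
    (by have := hs' i; omega) (by have := hs' j; omega)
    (iff_of_false (hvalid.not_adj_of_le _ _ hpw) (hvalid.not_adj_of_le _ _ hpw))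
  rw [← runLcw_append] at hsame
  exact hsepw ((hadj _ _).trans (hsame.trans (hadj _ _).symm))

lemma runLcw_map_insert (ls : List L) :
    (runLcw (ls.map LcwOp.insert)).n = ls.length ∧
      (∀ u v, ¬ (runLcw (ls.map LcwOp.insert)).adj u v) ∧
      ∀ c, (runLcw (ls.map LcwOp.insert)).lab c = ls[c]? := by
  induction ls using List.reverseRecOn with
  | nil => exact ⟨rfl, fun _ _ h => h, fun c => rfl⟩
  | append_singleton ls a ih =>
    obtain ⟨hn, hadj, hlab⟩ := ih
    simp only [List.map_append, List.map_singleton, runLcw_append, List.foldl_cons,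
      List.foldl_nil, LcwState.step, hn, List.length_append, List.length_singleton]
    refine ⟨trivial, hadj, fun c => ?_⟩
    rcases lt_trichotomy c ls.length with h | rfl | h
    · simp [h.ne, hlab, List.getElem?_append_left h]
    · simp
    · simp [h.ne', hlab, List.getElem?_eq_none (h.le : ls.length ≤ c),
        List.getElem?_eq_none (show (ls ++ [a]).length ≤ c by simp; omega)]

lemma foldl_map_join (ps : List (L × L)) (s : LcwState L) :
    let t := (ps.map fun p => LcwOp.join p.1 p.2).foldl LcwState.step s
    t.n = s.n ∧ t.lab = s.lab ∧ ∀ u v, t.adj u v ↔ s.adj u v ∨ ∃ p ∈ ps, u ≠ v ∧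
      ((s.lab u = some p.1 ∧ s.lab v = some p.2) ∨
        (s.lab u = some p.2 ∧ s.lab v = some p.1)) := by
  induction ps generalizing s with
  | nil => simp
  | cons p ps ih =>
    obtain ⟨hn, hlab, hadj⟩ := ih (s.step (LcwOp.join p.1 p.2))
    refine ⟨hn, hlab, fun u v => ?_⟩
    simp only [List.map_cons, List.foldl_cons, hadj, List.mem_cons, exists_eq_or_imp]
    simp only [LcwState.step]
    exact or_assoc

lemma exists_builds {N : ℕ} (G : SimpleGraph (Fin N)) :
    ∃ e : List (LcwOp (Fin N)), Builds e G := by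
  classical
  let ps := (List.finRange N ×ˢ List.finRange N).filter fun p => G.Adj p.1 p.2
  have hps : ∀ p, p ∈ ps ↔ G.Adj p.1 p.2 := by simp [ps]
  let s := runLcw ((List.finRange N).map LcwOp.insert)
  obtain ⟨hsn, hsadj, hslab⟩ := runLcw_map_insert (List.finRange N)
  obtain ⟨hn, -, hadj⟩ := foldl_map_join ps s
  have hlab : ∀ v : Fin N, s.lab v = some v := fun v => by simp [s, hslab]
  refine ⟨(List.finRange N).map LcwOp.insert ++ ps.map fun p => LcwOp.join p.1 p.2, Fin.val,
    ?_, Fin.val_injective, ?_, fun v => ?_, fun u v => ?_⟩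
  · simp only [WfExpr, List.mem_append, List.mem_map]
    rintro _ (⟨a, -, rfl⟩ | ⟨p, hp, rfl⟩) i j h
    · cases h
    · cases h
      exact G.ne_of_adj ((hps p).mp hp)
  all_goals simp only [runLcw_append, hn, s, hsn, List.length_finRange, Fintype.card_fin]
  · exact v.isLt
  · rw [hadj, or_iff_right (hsadj u v)]
    simp only [hlab, Option.some.injEq]
    constructor
    · intro h
      exact ⟨(u, v), (hps _).mpr h, Fin.val_injective.ne (G.ne_of_adj h), Or.inl ⟨rfl, rfl⟩⟩
    · rintro ⟨p, hp, -, ⟨rfl, rfl⟩ | ⟨rfl, rfl⟩⟩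
      exacts [(hps p).mp hp, ((hps p).mp hp).symm]

end Lcw

theorem le_lcw {N K : ℕ} {G : SimpleGraph (Fin N)}
    (h : ∀ f : Fin N → ℕ, Function.Injective f → ∃ (m : ℕ) (s : Fin K → Fin N),
      (∀ i, f (s i) < m) ∧ Pairwise fun i j => SeparatedAfter G f m (s i) (s j)) :
    K ≤ lcw G := by
  obtain ⟨e, he⟩ := exists_builds G
  refine le_csInf ⟨N, e, he⟩ ?_
  rintro j ⟨e, f, hb⟩
  obtain ⟨m, s, hs, hsep⟩ := h f hb.2.1
  simpa using hb.card_le hs hsep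

section SeparatedCut

variable {V : Type} {G : SimpleGraph V} {f : V → ℕ} {m : ℕ}

lemma SeparatedAfter.symm {a b : V} (h : SeparatedAfter G f m a b) : SeparatedAfter G f m b a :=
  let ⟨w, hw, hsep⟩ := h
  ⟨w, hw, fun h => hsep h.symm⟩

lemma SeparatedAfter.compl {a b : V} (h : SeparatedAfter G f m a b) (ha : f a < m)
    (hb : f b < m) : SeparatedAfter Gᶜ f m a b := by
  obtain ⟨w, hw, hsep⟩ := h
  have haw : a ≠ w := by rintro rfl; omega
  have hbw : b ≠ w := by rintro rfl; omega
  exact ⟨w, hw, fun hiff => hsep (not_iff_not.mp (by simpa [haw, hbw] using hiff))⟩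

structure IsSeparatedCut {K : ℕ} (G : SimpleGraph V) (f : V → ℕ) (m : ℕ) (s : Fin K → V) :
    Prop where
  lt : ∀ i, f (s i) < m
  exists_adj : ∀ i, ∃ w, m ≤ f w ∧ G.Adj (s i) w
  separated : Pairwise fun i j => SeparatedAfter G f m (s i) (s j)

lemma IsSeparatedCut.map {W : Type} {H : SimpleGraph W} (φ : G ↪g H) {f : W → ℕ} {K : ℕ}
    {s : Fin K → V} (h : IsSeparatedCut G (f ∘ φ) m s) : IsSeparatedCut H f m (φ ∘ s) where
  lt := h.lt
  exists_adj i :=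
    let ⟨w, hw, hadj⟩ := h.exists_adj i
    ⟨φ w, hw, φ.map_adj_iff.mpr hadj⟩
  separated _ _ hij :=
    let ⟨w, hw, hsep⟩ := h.separated hij
    ⟨φ w, hw, by simpa only [Function.comp_apply, φ.map_adj_iff] using hsep⟩

lemma IsSeparatedCut.cons {K : ℕ} {s : Fin K → V} (h : IsSeparatedCut G f m s) {u : V}
    (hu : f u < m) (hadj : ∃ w, m ≤ f w ∧ G.Adj u w)
    (hsep : ∀ i, SeparatedAfter G f m u (s i)) :
    IsSeparatedCut G f m (Fin.cons u s : Fin (K + 1) → V) where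
  lt i := Fin.cases hu h.lt i
  exists_adj i := Fin.cases hadj h.exists_adj i
  separated i j hij := by
    induction i using Fin.cases <;> induction j using Fin.cases
    · exact absurd rfl hij
    · simpa using hsep _
    · simpa using (hsep _).symm
    · simpa using h.separated (Fin.succ_injective _ |>.ne_iff.mp hij)

end SeparatedCut

section GraphOps

variable {V W : Type} {G : SimpleGraph V} {H : SimpleGraph W}

@[simp] lemma graphDisjUnion_adj_inl_inl (a b : V) :
    (GraphDisjUnion G H).Adj (.inl a) (.inl b) ↔ G.Adj a b := Iff.rfl

@[simp] lemma graphDisjUnion_adj_inr_inr (a b : W) :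
    (GraphDisjUnion G H).Adj (.inr a) (.inr b) ↔ H.Adj a b := Iff.rfl

@[simp] lemma graphDisjUnion_not_adj_inl_inr (a : V) (b : W) :
    ¬ (GraphDisjUnion G H).Adj (.inl a) (.inr b) := id

@[simp] lemma graphDisjUnion_not_adj_inr_inl (a : W) (b : V) :
    ¬ (GraphDisjUnion G H).Adj (.inr a) (.inl b) := id

@[simp] lemma graphJoin_adj_inl_inr (a : V) (b : W) : (GraphJoin G H).Adj (.inl a) (.inr b) := by
  simp [GraphJoin]

@[simp] lemma graphJoin_adj_inr_inr (a b : W) :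
    (GraphJoin G H).Adj (.inr a) (.inr b) ↔ H.Adj a b := by
  simp only [GraphJoin, SimpleGraph.compl_adj, ne_eq, Sum.inr.injEq, graphDisjUnion_adj_inr_inr]
  exact ⟨fun h => by_contra fun hn => h.2 ⟨h.1, hn⟩,
    fun h => ⟨H.ne_of_adj h, fun h' => h'.2 h⟩⟩

end GraphOps


section InducedSubgraph

variable {U V W : Type} {P : SimpleGraph U} {G : SimpleGraph V} {H : SimpleGraph W}

lemma InducedSubgraphOf.trans_embedding (h : InducedSubgraphOf P G) (φ : G ↪g H) :
    InducedSubgraphOf P H :=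
  let ⟨F, hF⟩ := h
  ⟨F.trans φ.toEmbedding, fun a b => (hF a b).trans φ.map_adj_iff.symm⟩

lemma not_inducedSubgraphOf_of_card_lt [Fintype U] [Fintype V]
    (h : Fintype.card V < Fintype.card U) : ¬ InducedSubgraphOf P G :=
  fun ⟨F, _⟩ => (Fintype.card_le_of_embedding F).not_gt h

lemma inducedSubgraphOf_of_forall_mem_range {X : Type} {K : SimpleGraph X} (φ : G ↪g K)
    (F : U ↪ X) (hF : ∀ a b, P.Adj a b ↔ K.Adj (F a) (F b))
    (hrange : ∀ a, F a ∈ Set.range φ) :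
    InducedSubgraphOf P G := by
  choose g hg using hrange
  refine ⟨⟨g, fun a b hab => F.injective (by rw [← hg a, ← hg b, hab])⟩, fun a b => ?_⟩
  rw [hF, ← hg a, ← hg b, φ.map_adj_iff]
  rfl

/-- `hconn` says that `P` is connected. -/
lemma InducedSubgraphOf.of_graphDisjUnion
    (hconn : ∀ c : U → Bool, (∃ a b, c a ≠ c b) → ∃ a b, P.Adj a b ∧ c a ≠ c b)
    (h : InducedSubgraphOf P (GraphDisjUnion G H)) :
    InducedSubgraphOf P G ∨ InducedSubgraphOf P H := by
  obtain ⟨F, hF⟩ := h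
  by_cases hl : ∀ a, (F a).isLeft
  · left
    refine inducedSubgraphOf_of_forall_mem_range (K := GraphDisjUnion G H)
      ⟨Function.Embedding.inl, Iff.rfl⟩ F hF fun a => ?_
    obtain ⟨v, hv⟩ := Sum.isLeft_iff.mp (hl a)
    exact ⟨v, hv.symm⟩
  by_cases hr : ∀ a, (F a).isRight
  · right
    refine inducedSubgraphOf_of_forall_mem_range (K := GraphDisjUnion G H)
      ⟨Function.Embedding.inr, Iff.rfl⟩ F hF fun a => ?_
    obtain ⟨v, hv⟩ := Sum.isRight_iff.mp (hr a)
    exact ⟨v, hv.symm⟩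
  push Not at hl hr
  obtain ⟨a, ha⟩ := hl
  obtain ⟨b, hb⟩ := hr
  obtain ⟨x, y, hxy, hc⟩ := hconn (fun a => (F a).isLeft) ⟨a, b, by simp_all⟩
  have hadj := (hF x y).mp hxy
  rcases hFx : F x with v | v <;> rcases hFy : F y with u | u <;> simp_all

/-- A pattern without a dominating vertex cannot use the apex of `K₁ ∗ H`. -/
lemma InducedSubgraphOf.of_graphJoin_unit
    (hdom : ∀ a, ∃ b, b ≠ a ∧ ¬ P.Adj a b)
    (h : InducedSubgraphOf P (GraphJoin (⊥ : SimpleGraph Unit) H)) : InducedSubgraphOf P H := by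
  obtain ⟨F, hF⟩ := h
  refine inducedSubgraphOf_of_forall_mem_range (K := GraphJoin (⊥ : SimpleGraph Unit) H)
    ⟨Function.Embedding.inr, graphJoin_adj_inr_inr _ _⟩ F hF fun a => ?_
  rcases ha : F a with u | w
  · obtain ⟨b, hba, hab⟩ := hdom a
    rcases hb : F b with u' | w
    · exact absurd (F.injective (by rw [ha, hb])) hba
    · exact absurd ((hF a b).mpr (by rw [ha, hb]; exact graphJoin_adj_inl_inr _ _)) hab
  · exact ⟨w, rfl⟩

end InducedSubgraph

lemma pathP4_bichromatic_adj :
    ∀ c : Fin 4 → Bool, (∃ a b, c a ≠ c b) → ∃ a b, pathP4.Adj a b ∧ c a ≠ c b := by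
  unfold pathP4; decide

lemma cycleC4_bichromatic_adj :
    ∀ c : Fin 4 → Bool, (∃ a b, c a ≠ c b) →
      ∃ a b, cycleC4.Adj a b ∧ c a ≠ c b := by
  unfold cycleC4; decide

lemma pathP4_exists_not_adj : ∀ a : Fin 4, ∃ b, b ≠ a ∧ ¬ pathP4.Adj a b := by
  unfold pathP4; decide

lemma cycleC4_exists_not_adj : ∀ a : Fin 4, ∃ b, b ≠ a ∧ ¬ cycleC4.Adj a b := by
  unfold cycleC4; decide

section QuasiThreshold

variable {V W : Type} {G : SimpleGraph V} {H : SimpleGraph W}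

lemma IsQuasiThreshold.graphDisjUnion (hG : IsQuasiThreshold G) (hH : IsQuasiThreshold H) :
    IsQuasiThreshold (GraphDisjUnion G H) :=
  ⟨fun h => (h.of_graphDisjUnion pathP4_bichromatic_adj).elim hG.1 hH.1,
    fun h => (h.of_graphDisjUnion cycleC4_bichromatic_adj).elim hG.2 hH.2⟩

lemma IsQuasiThreshold.graphJoin_unit (hH : IsQuasiThreshold H) :
    IsQuasiThreshold (GraphJoin (⊥ : SimpleGraph Unit) H) :=
  ⟨fun h => hH.1 (h.of_graphJoin_unit pathP4_exists_not_adj),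
    fun h => hH.2 (h.of_graphJoin_unit cycleC4_exists_not_adj)⟩

lemma IsQuasiThreshold.of_embedding (hG : IsQuasiThreshold G) (φ : H ↪g G) :
    IsQuasiThreshold H :=
  ⟨fun h => hG.1 (h.trans_embedding φ), fun h => hG.2 (h.trans_embedding φ)⟩

end QuasiThreshold

lemma isQuasiThreshold_qtG : ∀ k, IsQuasiThreshold (qtG k)
  | 0 =>
    ⟨not_inducedSubgraphOf_of_card_lt (by decide), not_inducedSubgraphOf_of_card_lt (by decide)⟩
  | k + 1 =>
    let h := isQuasiThreshold_qtG k
    (((h.graphDisjUnion h).graphDisjUnion (h.graphDisjUnion h))).graphJoin_unit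

def qtApex (k : ℕ) : qtV (k + 1) := .inl ()

def qtCopy (k : ℕ) : Fin 4 → qtV k → qtV (k + 1)
  | 0, v => .inr (.inl (.inl v))
  | 1, v => .inr (.inl (.inr v))
  | 2, v => .inr (.inr (.inl v))
  | 3, v => .inr (.inr (.inr v))

lemma qtCopy_injective (k : ℕ) (i : Fin 4) : Function.Injective (qtCopy k i) := by
  fin_cases i
  exacts [Sum.inr_injective.comp (Sum.inl_injective.comp Sum.inl_injective),
    Sum.inr_injective.comp (Sum.inl_injective.comp Sum.inr_injective),
    Sum.inr_injective.comp (Sum.inr_injective.comp Sum.inl_injective),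
    Sum.inr_injective.comp (Sum.inr_injective.comp Sum.inr_injective)]

lemma qtG_adj_apex (k : ℕ) (i : Fin 4) (v : qtV k) :
    (qtG (k + 1)).Adj (qtApex k) (qtCopy k i v) := by
  fin_cases i <;> exact graphJoin_adj_inl_inr _ _

lemma qtG_adj_qtCopy_iff (k : ℕ) (i j : Fin 4) (a b : qtV k) :
    (qtG (k + 1)).Adj (qtCopy k i a) (qtCopy k j b) ↔ i = j ∧ (qtG k).Adj a b := by
  fin_cases i <;> fin_cases j <;> simp [qtG, qtCopy]

def qtCopyEmbedding (k : ℕ) (i : Fin 4) : qtG k ↪g qtG (k + 1) where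
  toFun := qtCopy k i
  inj' := qtCopy_injective k i
  map_rel_iff' := by simp [qtG_adj_qtCopy_iff]

lemma exists_median (M : Fin 4 → ℕ) :
    ∃ a b c : Fin 4, a ≠ b ∧ c ≠ b ∧ M a ≤ M b ∧ M b ≤ M c := by
  rcases le_total (M 0) (M 1) with h01 | h10 <;> rcases le_total (M 1) (M 2) with h12 | h21
  · exact ⟨0, 1, 2, by decide, by decide, h01, h12⟩
  · rcases le_total (M 0) (M 2) with h02 | h20
    exacts [⟨0, 2, 1, by decide, by decide, h02, h21⟩,
      ⟨2, 0, 1, by decide, by decide, h20, h01⟩]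
  · rcases le_total (M 0) (M 2) with h02 | h20
    exacts [⟨1, 0, 2, by decide, by decide, h10, h02⟩,
      ⟨1, 2, 0, by decide, by decide, h12, h20⟩]
  · exact ⟨2, 1, 0, by decide, by decide, h21, h10⟩

/-- Extend the family of the copy `b` whose cut `M b` is the median of three. If the apex comes
before `M b`, add it: a late vertex of copy `c` separates it from the family. Otherwise add an
early vertex of copy `a`: the apex is its late neighbour, and the late neighbours inside copy `b`
separate it from the family. -/
theorem exists_isSeparatedCut_qtG :
    ∀ (k : ℕ) (f : qtV k → ℕ), Function.Injective f →
      ∃ (m : ℕ) (s : Fin (k + 1) → qtV k), IsSeparatedCut (qtG k) f m s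
  | 0, f, hf => by
    obtain ⟨a, b, hab, hlt⟩ : ∃ a b : Fin 2, a ≠ b ∧ f a < f b := by
      rcases (hf.ne (show (0 : Fin 2) ≠ 1 by decide)).lt_or_gt with h | h
      exacts [⟨0, 1, by decide, h⟩, ⟨1, 0, by decide, h⟩]
    exact ⟨f a + 1, fun _ => a, fun _ => Nat.lt_succ_self _, fun _ => ⟨b, hlt, hab⟩,
      fun i j hij => (hij (Subsingleton.elim (α := Fin 1) i j)).elim⟩
  | k + 1, f, hf => by
    choose M S hS using fun i =>
      exists_isSeparatedCut_qtG k (f ∘ qtCopy k i) (hf.comp (qtCopy_injective k i))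
    obtain ⟨a, b, c, hab, hcb, hMab, hMbc⟩ := exists_median M
    have hT := (hS b).map (qtCopyEmbedding k b)
    by_cases hz : f (qtApex k) < M b
    · obtain ⟨w, hw, -⟩ := (hS c).exists_adj 0
      have hw' : M b ≤ f (qtCopy k c w) := hMbc.trans hw
      refine ⟨M b, _, hT.cons hz ⟨_, hw', qtG_adj_apex k c w⟩ fun i => ⟨_, hw', ?_⟩⟩
      simp [qtCopyEmbedding, qtG_adj_apex, qtG_adj_qtCopy_iff, hcb.symm]
    · refine ⟨M b, _, hT.cons ((hS a).lt 0 |>.trans_le hMab)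
        ⟨qtApex k, not_lt.mp hz, (qtG_adj_apex k a _).symm⟩ fun i => ?_⟩
      obtain ⟨w, hw, hadj⟩ := (hS b).exists_adj i
      exact ⟨qtCopy k b w, hw, by simp [qtCopyEmbedding, qtG_adj_qtCopy_iff, hab, hadj]⟩

/-- the class of complements of quasi-threshold graphs has
unbounded linear clique-width. -/
theorem statement_10 (k : ℕ) :
    ∃ (n : ℕ) (G : SimpleGraph (Fin n)), IsQuasiThreshold G ∧ k < lcw Gᶜ := by
  let φ := (qtG k).overFinIso rfl
  refine ⟨_, _, (isQuasiThreshold_qtG k).of_embedding φ.symm.toEmbedding,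
    le_lcw fun f hf => ?_⟩
  obtain ⟨m, s, hs⟩ := exists_isSeparatedCut_qtG k (f ∘ φ) (hf.comp φ.injective)
  have hs' := hs.map φ.toEmbedding
  exact ⟨m, φ ∘ s, hs'.lt, fun i j hij => (hs'.separated hij).compl (hs'.lt i) (hs'.lt j)⟩
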